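/- Let N ≥ 3 be an integer, r ≥ 1, and let ξ be any function from {1, ..., r+1} to the nonzero complex numbers. Define the relation t ≺ t' on {1, ..., r+1} by: t ≺ t' if and only if m(ξ(t')·ξ(t)⁻¹) ≡ m(ξ(t')) - m(ξ(t)) (mod N) and, in addition, at least one of the following holds: m(ξ(t')·ξ(t)⁻¹) + m(ξ(t)·ξ(t')⁻¹) ≡ 1 (mod N), or t' < t. Then ≺ is a strict total order on {1, ..., r+1} (it is irreflexive, transitive, and any two distinct elements are comparable). -/

import Mathlib

/-!
Write `m(z) = ⌈F(z)⌉` with `F(z) = -N·arg(z)/(2π)`. Since `arg(z w⁻¹) ≡ arg z - arg w` modulo `2π`,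
`F(z w⁻¹) ≡ F(z) - F(w)` modulo `N`, and `⌈F(z) - F(w)⌉` equals `⌈F(z)⌉ - ⌈F(w)⌉` or that plus `1`
according as the ceiling gap `⌈F(z)⌉ - F(z)` is at least or less than that of `w`. As `N ≥ 2`,
this is visible modulo `N`, and `t ≺ t'` turns out to say that `(gap of ξ t, t)` precedes
`(gap of ξ t', t')` lexicographically, the indices being compared in reverse.
-/

/-- The principal argument of a nonzero complex number, normalized to lie in `[-π, π)`. -/
noncomputable def parg (z : ℂ) : ℝ :=
  if Complex.arg z = Real.pi then -Real.pi else Complex.arg z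

/-- `m(z) := ⌈-N·arg(z)/(2π)⌉` where `arg(z) ∈ [-π, π)`. -/
noncomputable def mfun (N : ℤ) (z : ℂ) : ℤ :=
  ⌈(-(N : ℝ) * parg z) / (2 * Real.pi)⌉

/-- `t ≺ t″` iff `m(ξ(t″)·ξ(t)⁻¹) ≡ m(ξ(t″)) - m(ξ(t)) (mod N)` and, in addition,
`m(ξ(t″)·ξ(t)⁻¹) + m(ξ(t)·ξ(t″)⁻¹) ≡ 1 (mod N)` or `t″ < t`. -/
noncomputable def prec (N : ℤ) (ξ : ℕ → ℂ) (t t' : ℕ) : Prop :=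
  mfun N (ξ t' * (ξ t)⁻¹) ≡ mfun N (ξ t') - mfun N (ξ t) [ZMOD N] ∧
  (mfun N (ξ t' * (ξ t)⁻¹) + mfun N (ξ t * (ξ t')⁻¹) ≡ 1 [ZMOD N] ∨ t' < t)

section CeilSub

variable {α : Type*} [CommRing α] [LinearOrder α] [IsStrictOrderedRing α] [FloorRing α] {a b : α}

theorem Int.ceil_sub_eq_of_le (h : ⌈b⌉ - b ≤ ⌈a⌉ - a) : ⌈a - b⌉ = ⌈a⌉ - ⌈b⌉ := by
  have := Int.le_ceil b
  have := Int.ceil_lt_add_one a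
  rw [Int.ceil_eq_iff]
  push_cast
  constructor <;> linarith

theorem Int.ceil_sub_eq_of_lt (h : ⌈a⌉ - a < ⌈b⌉ - b) : ⌈a - b⌉ = ⌈a⌉ - ⌈b⌉ + 1 := by
  have := Int.le_ceil a
  have := Int.ceil_lt_add_one b
  rw [Int.ceil_eq_iff]
  push_cast
  constructor <;> linarith

variable {N : ℤ}

theorem Int.not_one_modEq_zero (hN : 2 ≤ N) : ¬ 1 ≡ 0 [ZMOD N] := fun h ↦ by
  have := Int.le_of_dvd one_pos (Int.modEq_zero_iff_dvd.mp h)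
  omega

theorem Int.ceil_sub_modEq_iff (hN : 2 ≤ N) :
    ⌈a - b⌉ ≡ ⌈a⌉ - ⌈b⌉ [ZMOD N] ↔ ⌈b⌉ - b ≤ ⌈a⌉ - a := by
  refine ⟨fun h ↦ ?_, fun h ↦ by rw [Int.ceil_sub_eq_of_le h]⟩
  by_contra! hlt
  rw [Int.ceil_sub_eq_of_lt hlt] at h
  exact Int.not_one_modEq_zero hN (Int.ModEq.add_left_cancel' (⌈a⌉ - ⌈b⌉) (by simpa using h))

theorem Int.ceil_sub_add_ceil_sub_modEq_one_iff (hN : 2 ≤ N) (h : ⌈b⌉ - b ≤ ⌈a⌉ - a) :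
    ⌈a - b⌉ + ⌈b - a⌉ ≡ 1 [ZMOD N] ↔ ⌈b⌉ - b < ⌈a⌉ - a := by
  rw [Int.ceil_sub_eq_of_le h]
  rcases h.lt_or_eq with hlt | heq
  · rw [Int.ceil_sub_eq_of_lt hlt, show ⌈a⌉ - ⌈b⌉ + (⌈b⌉ - ⌈a⌉ + 1) = 1 by ring]
    exact iff_of_true rfl hlt
  · rw [Int.ceil_sub_eq_of_le heq.ge, heq]
    simpa using fun h ↦ Int.not_one_modEq_zero hN h.symm

end CeilSub

theorem parg_coe_angle (z : ℂ) : (parg z : Real.Angle) = Complex.arg z := by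
  unfold parg
  split_ifs with h
  · rw [h, Real.Angle.coe_neg, Real.Angle.neg_coe_pi]
  · rfl

theorem exists_parg_mul_inv {z w : ℂ} (hz : z ≠ 0) (hw : w ≠ 0) :
    ∃ k : ℤ, parg (z * w⁻¹) = parg z - parg w + 2 * Real.pi * k := by
  have h : (parg (z * w⁻¹) : Real.Angle) = ((parg z - parg w : ℝ) : Real.Angle) := by
    rw [parg_coe_angle, Complex.arg_mul_coe_angle hz (inv_ne_zero hw), Complex.arg_inv_coe_angle,
      Real.Angle.coe_sub, parg_coe_angle, parg_coe_angle, sub_eq_add_neg]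
  obtain ⟨k, hk⟩ := Real.Angle.angle_eq_iff_two_pi_dvd_sub.mp h
  exact ⟨k, by linarith⟩

noncomputable def mReal (N : ℤ) (z : ℂ) : ℝ := (-(N : ℝ) * parg z) / (2 * Real.pi)

theorem mfun_eq_ceil_mReal (N : ℤ) (z : ℂ) : mfun N z = ⌈mReal N z⌉ := rfl

theorem mfun_mul_inv_modEq (N : ℤ) {z w : ℂ} (hz : z ≠ 0) (hw : w ≠ 0) :
    mfun N (z * w⁻¹) ≡ ⌈mReal N z - mReal N w⌉ [ZMOD N] := by
  obtain ⟨k, hk⟩ := exists_parg_mul_inv hz hw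
  have hmReal : mReal N (z * w⁻¹) = mReal N z - mReal N w + ((-(k * N) : ℤ) : ℝ) := by
    unfold mReal
    rw [hk]
    push_cast
    field_simp
    ring
  rw [mfun_eq_ceil_mReal, hmReal, Int.ceil_add_intCast]
  exact Int.modEq_iff_dvd.mpr ⟨k, by ring⟩

noncomputable def precKey (N : ℤ) (ξ : ℕ → ℂ) (t : ℕ) : ℝ ×ₗ ℕᵒᵈ :=
  toLex (mfun N (ξ t) - mReal N (ξ t), OrderDual.toDual t)

theorem precKey_injective (N : ℤ) (ξ : ℕ → ℂ) : Function.Injective (precKey N ξ) := by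
  intro t t' h
  simp only [precKey, toLex_inj, Prod.mk.injEq, OrderDual.toDual_inj] at h
  exact h.2

theorem prec_iff_precKey_lt {N : ℤ} (hN : 2 ≤ N) {ξ : ℕ → ℂ} {t t' : ℕ}
    (ht : ξ t ≠ 0) (ht' : ξ t' ≠ 0) :
    prec N ξ t t' ↔ precKey N ξ t < precKey N ξ t' := by
  have h₁ := mfun_mul_inv_modEq N ht' ht
  have h₁₂ := h₁.add (mfun_mul_inv_modEq N ht ht')
  have hle := Int.ceil_sub_modEq_iff hN (a := mReal N (ξ t')) (b := mReal N (ξ t))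
  have hlt := Int.ceil_sub_add_ceil_sub_modEq_one_iff hN (a := mReal N (ξ t')) (b := mReal N (ξ t))
  simp only [← mfun_eq_ceil_mReal] at hle hlt
  rw [prec, precKey, precKey, Prod.Lex.toLex_lt_toLex, OrderDual.toDual_lt_toDual,
    Iff.intro h₁.symm.trans h₁.trans, hle, Iff.intro h₁₂.symm.trans h₁₂.trans]
  constructor
  · rintro ⟨hab, hsum | hidx⟩
    · exact .inl ((hlt hab).mp hsum)
    · exact hab.lt_or_eq.imp_right fun heq ↦ ⟨heq, hidx⟩
  · rintro (hab | ⟨heq, hidx⟩)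
    · exact ⟨hab.le, .inl ((hlt hab.le).mpr hab)⟩
    · exact ⟨heq.le, .inr hidx⟩

theorem stmt7_general (N : ℤ) (hN : 3 ≤ N) (r : ℕ) (ξ : ℕ → ℂ)
    (hξ : ∀ t ∈ Finset.Icc 1 (r + 1), ξ t ≠ 0) :
    (∀ t ∈ Finset.Icc 1 (r + 1), ¬ prec N ξ t t) ∧
    (∀ t ∈ Finset.Icc 1 (r + 1), ∀ t' ∈ Finset.Icc 1 (r + 1), ∀ t'' ∈ Finset.Icc 1 (r + 1),
      prec N ξ t t' → prec N ξ t' t'' → prec N ξ t t'') ∧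
    (∀ t ∈ Finset.Icc 1 (r + 1), ∀ t' ∈ Finset.Icc 1 (r + 1), t ≠ t' →
      prec N ξ t t' ∨ prec N ξ t' t) := by
  have key {t t'} (ht : t ∈ Finset.Icc 1 (r + 1)) (ht' : t' ∈ Finset.Icc 1 (r + 1)) :=
    prec_iff_precKey_lt (N := N) (by omega) (hξ t ht) (hξ t' ht')
  refine ⟨fun t ht ↦ ?_, fun t ht t' ht' t'' ht'' ↦ ?_, fun t ht t' ht' hne ↦ ?_⟩
  · rw [key ht ht]
    exact lt_irrefl _
  · rw [key ht ht', key ht' ht'', key ht ht'']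
    exact lt_trans
  · rw [key ht ht', key ht' ht]
    exact ((precKey_injective N ξ).ne hne).lt_or_gt

theorem stmt7 (N : ℤ) (hN : 3 ≤ N) (r : ℕ) (hr : 1 ≤ r) (ξ : ℕ → ℂ)
    (hξ : ∀ t ∈ Finset.Icc 1 (r + 1), ξ t ≠ 0) :
    (∀ t ∈ Finset.Icc 1 (r + 1), ¬ prec N ξ t t) ∧
    (∀ t ∈ Finset.Icc 1 (r + 1), ∀ t' ∈ Finset.Icc 1 (r + 1), ∀ t'' ∈ Finset.Icc 1 (r + 1),
      prec N ξ t t' → prec N ξ t' t'' → prec N ξ t t'') ∧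
    (∀ t ∈ Finset.Icc 1 (r + 1), ∀ t' ∈ Finset.Icc 1 (r + 1), t ≠ t' →
      prec N ξ t t' ∨ prec N ξ t' t) :=
  stmt7_general N hN r ξ hξ
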